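/- (Variational formula for the entropic risk measure) For a finite irreducible aperiodic Markov chain with transition matrix P and cost C, the entropic risk e(α) := Λ(α)/α satisfies e(α) = sup over irreducible aperiodic stochastic matrices Q with Q ≪ P of [E_{π_Q}[C(X)] − (1/α) E_{π_Q}[D_KL(Q(X,·) ‖ P(X,·))]], where π_Q is the stationary distribution of Q. -/

import Mathlib

open Matrix Filter Topology

/-- A (row-)stochastic matrix on a finite state space. -/
def StochasticMat {X : Type*} [Fintype X] (P : Matrix X X ℝ) : Prop :=
  (∀ x y, 0 ≤ P x y) ∧ ∀ x, ∑ y, P x y = 1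

/-- A primitive nonnegative matrix: some power has all entries strictly positive.
For finite stochastic matrices this is equivalent to irreducibility together with
aperiodicity. -/
def PrimitiveMat {X : Type*} [Fintype X] [DecidableEq X] (P : Matrix X X ℝ) : Prop :=
  ∃ n : ℕ, 0 < n ∧ ∀ x y, 0 < (P ^ n) x y

/-!
Let `Q̂(x,y) = e^{αC(x)} P(x,y) h(y) / (λ h(x))` be the Doob transform of the tilted kernel by its
positive eigenvector: a stochastic matrix with the same support as `P`, hence primitive. For an
admissible `Q` with stationary law `π`,
`log (Q/P) = log (Q/Q̂) + αC(x) − log λ + log h(y) − log h(x)` on the support of `Q`, and averaging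
against `π(x) Q(x,y)` the `log h` terms cancel by stationarity. So the objective at `Q` equals
`log λ / α − (1/α) E_π[D_KL(Q(X,·) ‖ Q̂(X,·))]`, which by Gibbs' inequality is at most `log λ / α`,
with equality at `Q = Q̂`.
-/

open Finset

namespace Matrix

variable {n R : Type*} [Fintype n] [DecidableEq n] [Ring R] [LinearOrder R] [IsOrderedRing R]
  [PosMulStrictMono R] [Nontrivial R]

theorem pow_apply_pos_iff_of_pos_iff {A B : Matrix n n R} (hA : ∀ i j, 0 ≤ A i j)
    (hB : ∀ i j, 0 ≤ B i j) (hAB : ∀ i j, 0 < A i j ↔ 0 < B i j) (k : ℕ) (i j : n) :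
    0 < (A ^ k) i j ↔ 0 < (B ^ k) i j := by
  have hquiver : toQuiver A = toQuiver B := by
    unfold toQuiver
    congr
    funext i j
    rw [propext (hAB i j)]
  rw [pow_apply_pos_iff_nonempty_path hA, pow_apply_pos_iff_nonempty_path hB, hquiver]

end Matrix

theorem sub_le_mul_log_div {q r : ℝ} (hq : 0 ≤ q) (hr : 0 ≤ r) (hqr : r = 0 → q = 0) :
    q - r ≤ q * Real.log (q / r) := by
  rcases hr.eq_or_lt with rfl | hr
  · simp [hqr rfl]
  calc q - r = r * (q / r - 1) := by field_simp
    _ ≤ r * (q / r * Real.log (q / r)) :=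
      mul_le_mul_of_nonneg_left (Real.self_sub_one_le_mul_log (div_nonneg hq hr.le)) hr.le
    _ = q * Real.log (q / r) := by field_simp

theorem mul_log_div_eq_mul_log_div_mul_add {q p w : ℝ} (hw : 0 < w) (hqp : p = 0 → q = 0) :
    q * Real.log (q / p) = q * Real.log (q / (p * w)) + q * Real.log w := by
  rcases eq_or_ne q 0 with rfl | hq
  · simp
  have hp : p ≠ 0 := fun hp => hq (hqp hp)
  rw [← mul_add, ← Real.log_mul (by positivity) hw.ne']
  congr 2
  field_simp

section

variable {X : Type*}

noncomputable def tiltedMat (α : ℝ) (C : X → ℝ) (P : Matrix X X ℝ) : Matrix X X ℝ :=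
  of fun x y => Real.exp (α * C x) * P x y

noncomputable def doobTransform (S : Matrix X X ℝ) (h : X → ℝ) (lam : ℝ) : Matrix X X ℝ :=
  of fun x y => S x y * h y / (lam * h x)

section TiltedKernel

variable (α : ℝ) (C : X → ℝ) {P : Matrix X X ℝ} {h : X → ℝ} {lam : ℝ}

theorem doobTransform_tiltedMat_apply (x y : X) :
    doobTransform (tiltedMat α C P) h lam x y =
      P x y * (Real.exp (α * C x) * h y / (lam * h x)) := by
  simp only [doobTransform, tiltedMat, of_apply]
  ring

theorem exp_mul_div_mul_pos (hpos : ∀ x, 0 < h x) (hlam : 0 < lam) (x y : X) :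
    0 < Real.exp (α * C x) * h y / (lam * h x) := by
  have := hpos x
  have := hpos y
  positivity

theorem doobTransform_tiltedMat_eq_zero_iff (hpos : ∀ x, 0 < h x) (hlam : 0 < lam) (x y : X) :
    doobTransform (tiltedMat α C P) h lam x y = 0 ↔ P x y = 0 := by
  rw [doobTransform_tiltedMat_apply, mul_eq_zero,
    or_iff_left (exp_mul_div_mul_pos α C hpos hlam x y).ne']

theorem doobTransform_tiltedMat_pos_iff (hpos : ∀ x, 0 < h x) (hlam : 0 < lam) (x y : X) :
    0 < doobTransform (tiltedMat α C P) h lam x y ↔ 0 < P x y := by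
  rw [doobTransform_tiltedMat_apply,
    mul_pos_iff_of_pos_right (exp_mul_div_mul_pos α C hpos hlam x y)]

end TiltedKernel

variable [Fintype X]

theorem PrimitiveMat.of_pos_iff [DecidableEq X] {A B : Matrix X X ℝ} (hA : ∀ x y, 0 ≤ A x y)
    (hB : ∀ x y, 0 ≤ B x y) (hAB : ∀ x y, 0 < A x y ↔ 0 < B x y) (hprim : PrimitiveMat A) :
    PrimitiveMat B := by
  obtain ⟨k, hk, hpos⟩ := hprim
  exact ⟨k, hk, fun x y => (Matrix.pow_apply_pos_iff_of_pos_iff hA hB hAB k x y).1 (hpos x y)⟩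

namespace StochasticMat

variable {Q : Matrix X X ℝ}

theorem exists_pos (hQ : StochasticMat Q) (x : X) : ∃ y, 0 < Q x y := by
  obtain ⟨y, -, hy⟩ := exists_lt_of_sum_lt (s := univ) (f := 0) (g := Q x)
    (by simp [hQ.2 x])
  exact ⟨y, hy⟩

theorem exists_vecMul_eq_self [Nonempty X] (hQ : StochasticMat Q) :
    ∃ v ≠ 0, v ᵥ* Q = v := by
  classical
  have hdet : (Q - 1).det = 0 := by
    refine Matrix.exists_mulVec_eq_zero_iff.1 ⟨1, one_ne_zero, funext fun x => ?_⟩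
    rw [Matrix.sub_mulVec, Matrix.one_mulVec]
    simp [Matrix.mulVec, dotProduct, hQ.2 x]
  obtain ⟨v, hv0, hv⟩ := Matrix.exists_vecMul_eq_zero_iff.2 hdet
  exact ⟨v, hv0, by rwa [Matrix.vecMul_sub, Matrix.vecMul_one, sub_eq_zero] at hv⟩

theorem abs_vecMul_eq_self (hQ : StochasticMat Q) {v : X → ℝ} (hv : v ᵥ* Q = v) :
    |v| ᵥ* Q = |v| := by
  have hle : ∀ y, |v| y ≤ (|v| ᵥ* Q) y := fun y => by
    calc |v| y = |∑ x, v x * Q x y| := by rw [Pi.abs_apply, ← congrFun hv y]; rfl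
      _ ≤ ∑ x, |v x * Q x y| := abs_sum_le_sum_abs _ _
      _ = (|v| ᵥ* Q) y := by simp [Matrix.vecMul, dotProduct, abs_mul, abs_of_nonneg (hQ.1 _ y)]
  have hsum : ∑ y, (|v| ᵥ* Q) y = ∑ y, |v| y := by
    simp only [Matrix.vecMul, dotProduct]
    rw [sum_comm]
    simp [← mul_sum, hQ.2]
  exact funext fun y => ((sum_eq_sum_iff_of_le fun y _ => hle y).1 hsum.symm y
    (mem_univ y)).symm

theorem exists_stationary [Nonempty X] (hQ : StochasticMat Q) :
    ∃ π : X → ℝ, (∀ x, 0 ≤ π x) ∧ (∑ x, π x = 1) ∧ ∀ y, ∑ x, π x * Q x y = π y := by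
  obtain ⟨v, hv0, hv⟩ := hQ.exists_vecMul_eq_self
  have hmass : 0 < ∑ x, |v x| := by
    obtain ⟨x, hx⟩ := Function.ne_iff.1 hv0
    exact sum_pos' (fun x _ => abs_nonneg _) ⟨x, mem_univ x, abs_pos.2 hx⟩
  refine ⟨fun x => |v x| / ∑ x, |v x|, fun x => by positivity, ?_, fun y => ?_⟩
  · rw [← sum_div, div_self hmass.ne']
  · have := congrFun (hQ.abs_vecMul_eq_self hv) y
    simp only [Matrix.vecMul, dotProduct, Pi.abs_apply] at this
    simp_rw [div_mul_eq_mul_div, ← sum_div, this]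

end StochasticMat

theorem sum_mul_sum_of_stationary {Q : Matrix X X ℝ} {π : X → ℝ}
    (hπ : ∀ y, ∑ x, π x * Q x y = π y) (g : X → ℝ) :
    ∑ x, π x * ∑ y, Q x y * g y = ∑ x, π x * g x := by
  simp_rw [mul_sum, ← mul_assoc]
  rw [sum_comm]
  simp_rw [← sum_mul, hπ]

noncomputable def rowKL (Q R : Matrix X X ℝ) (x : X) : ℝ :=
  ∑ y, Q x y * Real.log (Q x y / R x y)

theorem rowKL_self (Q : Matrix X X ℝ) (x : X) : rowKL Q Q x = 0 :=
  sum_eq_zero fun y _ => by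
    rcases eq_or_ne (Q x y) 0 with hq | hq <;> simp [hq]

theorem rowKL_nonneg {Q R : Matrix X X ℝ} (hQ : StochasticMat Q) (hR : StochasticMat R)
    (hQR : ∀ x y, R x y = 0 → Q x y = 0) (x : X) : 0 ≤ rowKL Q R x := by
  have := sum_le_sum fun y (_ : y ∈ univ) =>
    sub_le_mul_log_div (hQ.1 x y) (hR.1 x y) (hQR x y)
  rwa [sum_sub_distrib, hQ.2 x, hR.2 x, sub_self] at this

section Eigenvector

variable {S : Matrix X X ℝ} {h : X → ℝ} {lam : ℝ}

theorem pos_of_mulVec_eq_smul (hS : ∀ x y, 0 ≤ S x y) (hpos : ∀ x, 0 < h x)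
    (heig : S *ᵥ h = lam • h) {x y : X} (hxy : 0 < S x y) : 0 < lam := by
  have hrow : 0 < (S *ᵥ h) x :=
    sum_pos' (fun z _ => mul_nonneg (hS x z) (hpos z).le)
      ⟨y, mem_univ y, mul_pos hxy (hpos y)⟩
  rw [heig, Pi.smul_apply, smul_eq_mul] at hrow
  exact pos_of_mul_pos_left hrow (hpos x).le

theorem stochasticMat_doobTransform (hS : ∀ x y, 0 ≤ S x y) (hpos : ∀ x, 0 < h x)
    (hlam : 0 < lam) (heig : S *ᵥ h = lam • h) : StochasticMat (doobTransform S h lam) := by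
  refine ⟨fun x y => div_nonneg (mul_nonneg (hS x y) (hpos y).le) (mul_pos hlam (hpos x)).le,
    fun x => ?_⟩
  have := congrFun heig x
  simp only [Matrix.mulVec, dotProduct, Pi.smul_apply, smul_eq_mul] at this
  simp only [doobTransform, of_apply, ← sum_div, this,
    div_self (mul_pos hlam (hpos x)).ne']

end Eigenvector

section VariationalIdentity

variable (α : ℝ) (C : X → ℝ) {P Q : Matrix X X ℝ} {h : X → ℝ} {lam : ℝ}

theorem rowKL_eq_rowKL_doobTransform_add (hQ : ∀ x, ∑ y, Q x y = 1)
    (hQP : ∀ x y, P x y = 0 → Q x y = 0) (hpos : ∀ x, 0 < h x) (hlam : 0 < lam) (x : X) :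
    rowKL Q P x = rowKL Q (doobTransform (tiltedMat α C P) h lam) x +
      (α * C x - Real.log lam - Real.log (h x)) + ∑ y, Q x y * Real.log (h y) := by
  have hterm : ∀ y, Q x y * Real.log (Q x y / P x y) =
      Q x y * Real.log (Q x y / doobTransform (tiltedMat α C P) h lam x y) +
        Q x y * (α * C x - Real.log lam - Real.log (h x)) + Q x y * Real.log (h y) := fun y => by
    rw [doobTransform_tiltedMat_apply,
      mul_log_div_eq_mul_log_div_mul_add (exp_mul_div_mul_pos α C hpos hlam x y) (hQP x y),
      Real.log_div (mul_pos (Real.exp_pos _) (hpos y)).ne' (mul_pos hlam (hpos x)).ne',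
      Real.log_mul (Real.exp_pos _).ne' (hpos y).ne', Real.log_mul hlam.ne' (hpos x).ne',
      Real.log_exp]
    ring
  simp only [rowKL, sum_congr rfl fun y _ => hterm y, sum_add_distrib,
    ← sum_mul, hQ x, one_mul]

theorem sum_mul_rowKL_eq_of_stationary {π : X → ℝ} (hQ : ∀ x, ∑ y, Q x y = 1)
    (hQP : ∀ x y, P x y = 0 → Q x y = 0) (hπ : ∑ x, π x = 1)
    (hstat : ∀ y, ∑ x, π x * Q x y = π y) (hpos : ∀ x, 0 < h x) (hlam : 0 < lam) :
    ∑ x, π x * rowKL Q P x =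
      ∑ x, π x * rowKL Q (doobTransform (tiltedMat α C P) h lam) x +
        α * ∑ x, π x * C x - Real.log lam := by
  calc ∑ x, π x * rowKL Q P x
      = ∑ x, (π x * rowKL Q (doobTransform (tiltedMat α C P) h lam) x +
          (α * (π x * C x) - π x * Real.log lam - π x * Real.log (h x)) +
          π x * ∑ y, Q x y * Real.log (h y)) := sum_congr rfl fun x _ => by
        rw [rowKL_eq_rowKL_doobTransform_add α C hQ hQP hpos hlam]
        ring
    _ = _ := by
        simp only [sum_add_distrib, sum_sub_distrib, sum_mul_sum_of_stationary hstat,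
          ← mul_sum, ← sum_mul, hπ]
        ring

theorem sum_mul_sub_rowKL_eq_log_div_sub {π : X → ℝ} (hα : α ≠ 0) (hQ : ∀ x, ∑ y, Q x y = 1)
    (hQP : ∀ x y, P x y = 0 → Q x y = 0) (hπ : ∑ x, π x = 1)
    (hstat : ∀ y, ∑ x, π x * Q x y = π y) (hpos : ∀ x, 0 < h x) (hlam : 0 < lam) :
    (∑ x, π x * C x) - 1 / α * ∑ x, π x * rowKL Q P x =
      Real.log lam / α - 1 / α * ∑ x, π x * rowKL Q (doobTransform (tiltedMat α C P) h lam) x := by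
  rw [sum_mul_rowKL_eq_of_stationary α C hQ hQP hπ hstat hpos hlam]
  field_simp
  ring

end VariationalIdentity

end

/-- **variational formula for the entropic risk measure.** For a finite
irreducible aperiodic chain with transition matrix `P` and cost `C`, the entropic risk
`e(α) := Λ(α)/α` (with `Λ(α) = ln λ̂₁`, the log-Perron eigenvalue of `diag (e^{αC}) P`,
characterized by a strictly positive right eigenvector) equals the supremum over all
irreducible aperiodic stochastic matrices `Q ≪ P` — with (unique) stationary distribution
`π_Q` — of `E_{π_Q}[C] − (1/α) E_{π_Q}[D_KL(Q(X,·)‖P(X,·))]`. -/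
theorem statement9 {X : Type*} [Fintype X] [DecidableEq X] [Nonempty X]
    (P : Matrix X X ℝ) (hP : StochasticMat P) (hprim : PrimitiveMat P)
    (C : X → ℝ) (α : ℝ) (hα : 0 < α)
    (lam : ℝ) (h : X → ℝ) (hpos : ∀ x, 0 < h x)
    (heig : (Matrix.of fun x y => Real.exp (α * C x) * P x y) *ᵥ h = lam • h) :
    Real.log lam / α =
      sSup {v : ℝ | ∃ Q : Matrix X X ℝ, ∃ π : X → ℝ,
        StochasticMat Q ∧ PrimitiveMat Q ∧
        (∀ x y, P x y = 0 → Q x y = 0) ∧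
        (∀ x, 0 ≤ π x) ∧ (∑ x, π x = 1) ∧ (∀ y, ∑ x, π x * Q x y = π y) ∧
        v = (∑ x, π x * C x) -
          (1 / α) * ∑ x, π x * ∑ y, Q x y * Real.log (Q x y / P x y)} := by
  have hS : ∀ x y, 0 ≤ tiltedMat α C P x y := fun x y => mul_nonneg (Real.exp_pos _).le (hP.1 x y)
  obtain ⟨y₀, hy₀⟩ := hP.exists_pos (Classical.arbitrary X)
  have hlam : 0 < lam := pos_of_mulVec_eq_smul hS hpos heig (mul_pos (Real.exp_pos _) hy₀)
  set D := doobTransform (tiltedMat α C P) h lam with hD_def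
  have hD : StochasticMat D := stochasticMat_doobTransform hS hpos hlam heig
  have hD_zero : ∀ x y, D x y = 0 ↔ P x y = 0 := doobTransform_tiltedMat_eq_zero_iff α C hpos hlam
  obtain ⟨π, hπ0, hπ1, hstat⟩ := hD.exists_stationary
  symm
  refine IsGreatest.csSup_eq ⟨⟨D, π, hD, hprim.of_pos_iff hP.1 hD.1 fun x y =>
    (doobTransform_tiltedMat_pos_iff α C hpos hlam x y).symm, fun x y => (hD_zero x y).2, hπ0, hπ1,
    hstat, ?_⟩, ?_⟩
  · have hvalue := sum_mul_sub_rowKL_eq_log_div_sub α C hα.ne' hD.2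
      (fun x y => (hD_zero x y).2) hπ1 hstat hpos hlam
    simp only [← hD_def, rowKL_self, mul_zero, sum_const_zero, sub_zero] at hvalue
    exact hvalue.symm
  · rintro v ⟨Q, π, hQ, -, hQP, hπ0, hπ1, hstat, rfl⟩
    have hKL : 0 ≤ ∑ x, π x * rowKL Q D x := sum_nonneg fun x _ =>
      mul_nonneg (hπ0 x) (rowKL_nonneg hQ hD (fun x y hD0 => hQP x y ((hD_zero x y).1 hD0)) x)
    calc _ = Real.log lam / α - 1 / α * ∑ x, π x * rowKL Q D x :=
          sum_mul_sub_rowKL_eq_log_div_sub α C hα.ne' hQ.2 hQP hπ1 hstat hpos hlam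
      _ ≤ Real.log lam / α := sub_le_self _ (by positivity)
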